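/- arXiv:2305.05818 — 5 statements merged into one kernel-verified Lean document; each statement's English description precedes it below -/
import Mathlib

section
/- Let G₁ and G₂ be digraphs, each with at least one vertex. Then the Cartesian product G₁ □ G₂ is consistently directed if and only if both G₁ and G₂ are consistently directed. -/
/-- The Cartesian product of two digraphs (given by their adjacency relations). -/
def boxAdj {V₁ V₂ : Type*} (A₁ : V₁ → V₁ → Prop) (A₂ : V₂ → V₂ → Prop) :
    V₁ × V₂ → V₁ × V₂ → Prop :=
  fun p q => (p.1 = q.1 ∧ A₂ p.2 q.2) ∨ (p.2 = q.2 ∧ A₁ p.1 q.1)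

/-- A source of a digraph: a vertex with no incoming edge. -/
def IsSourceVertex {V : Type*} (A : V → V → Prop) (s : V) : Prop := ∀ v, ¬ A v s

/-- A target of a digraph: a vertex with no outgoing edge. -/
def IsTargetVertex {V : Type*} (A : V → V → Prop) (t : V) : Prop := ∀ v, ¬ A t v

/-- Weak connectivity: any two vertices are joined by a path in the symmetrized digraph. -/
def WeaklyConnected {V : Type*} (A : V → V → Prop) : Prop :=
  ∀ a b : V, Relation.ReflTransGen (fun x y => A x y ∨ A y x) a b

/-- A digraph has no directed cycles. -/
def NoDirectedCycles {V : Type*} (A : V → V → Prop) : Prop :=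
  ∀ v : V, ¬ Relation.TransGen A v v

/-- A digraph is weakly directed if it is weakly connected with a unique source
and a unique target. -/
def WeaklyDirected {V : Type*} (A : V → V → Prop) : Prop :=
  WeaklyConnected A ∧ (∃! s, IsSourceVertex A s) ∧ (∃! t, IsTargetVertex A t)

/-- A digraph is consistently directed if it is weakly directed and has no directed cycles. -/
def ConsistentlyDirected {V : Type*} (A : V → V → Prop) : Prop :=
  WeaklyDirected A ∧ NoDirectedCycles A

/-- Two digraphs are isomorphic: there is a bijection of vertex sets preserving
adjacency in both directions. -/
def DigraphIso {V₁ V₂ : Type*} (A₁ : V₁ → V₁ → Prop) (A₂ : V₂ → V₂ → Prop) : Prop :=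
  ∃ e : V₁ ≃ V₂, ∀ a b : V₁, A₂ (e a) (e b) ↔ A₁ a b

/-- The `n`-dimensional simplicial digraph `Δⁿ` on vertices `v₀, …, vₙ`,
with an edge from `v_i` to `v_j` iff `i < j`. -/
def simplexAdj (n : ℕ) : Fin (n + 1) → Fin (n + 1) → Prop := fun i j => i < j


section BoxAux
variable {V₁ V₂ : Type*} {A₁ : V₁ → V₁ → Prop} {A₂ : V₂ → V₂ → Prop}

lemma isSource_box_iff (s : V₁ × V₂) :
    IsSourceVertex (boxAdj A₁ A₂) s ↔ IsSourceVertex A₁ s.1 ∧ IsSourceVertex A₂ s.2 := by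
  constructor
  · intro h
    exact ⟨fun u hu => h (u, s.2) (Or.inr ⟨rfl, hu⟩),
           fun u hu => h (s.1, u) (Or.inl ⟨rfl, hu⟩)⟩
  · rintro ⟨h1, h2⟩ v (⟨_, hv⟩ | ⟨_, hv⟩)
    · exact h2 _ hv
    · exact h1 _ hv

lemma isTarget_box_iff (t : V₁ × V₂) :
    IsTargetVertex (boxAdj A₁ A₂) t ↔ IsTargetVertex A₁ t.1 ∧ IsTargetVertex A₂ t.2 := by
  constructor
  · intro h
    exact ⟨fun u hu => h (u, t.2) (Or.inr ⟨rfl, hu⟩),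
           fun u hu => h (t.1, u) (Or.inl ⟨rfl, hu⟩)⟩
  · rintro ⟨h1, h2⟩ v (⟨_, hv⟩ | ⟨_, hv⟩)
    · exact h2 _ hv
    · exact h1 _ hv

lemma box_transGen_proj {p q : V₁ × V₂}
    (h : Relation.TransGen (boxAdj A₁ A₂) p q) :
    Relation.TransGen A₁ p.1 q.1 ∨ Relation.TransGen A₂ p.2 q.2 := by
  induction h with
  | single h =>
    rcases h with ⟨_, ha⟩ | ⟨_, ha⟩
    · exact Or.inr (Relation.TransGen.single ha)
    · exact Or.inl (Relation.TransGen.single ha)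
  | tail _ hbc ih =>
    rcases hbc with ⟨he, ha⟩ | ⟨he, ha⟩
    · rcases ih with h1 | h2
      · exact Or.inl (he ▸ h1)
      · exact Or.inr (h2.tail ha)
    · rcases ih with h1 | h2
      · exact Or.inl (h1.tail ha)
      · exact Or.inr (he ▸ h2)

lemma box_sym_proj1 {p q : V₁ × V₂}
    (h : Relation.ReflTransGen (fun x y => boxAdj A₁ A₂ x y ∨ boxAdj A₁ A₂ y x) p q) :
    Relation.ReflTransGen (fun x y => A₁ x y ∨ A₁ y x) p.1 q.1 := by
  induction h with
  | refl => exact Relation.ReflTransGen.refl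
  | tail _ hbc ih =>
    rcases hbc with (⟨he, _⟩ | ⟨_, ha⟩) | (⟨he, _⟩ | ⟨_, ha⟩)
    · exact he ▸ ih
    · exact ih.tail (Or.inl ha)
    · exact he ▸ ih
    · exact ih.tail (Or.inr ha)

lemma box_sym_proj2 {p q : V₁ × V₂}
    (h : Relation.ReflTransGen (fun x y => boxAdj A₁ A₂ x y ∨ boxAdj A₁ A₂ y x) p q) :
    Relation.ReflTransGen (fun x y => A₂ x y ∨ A₂ y x) p.2 q.2 := by
  induction h with
  | refl => exact Relation.ReflTransGen.refl
  | tail _ hbc ih =>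
    rcases hbc with (⟨_, ha⟩ | ⟨he, _⟩) | (⟨_, ha⟩ | ⟨he, _⟩)
    · exact ih.tail (Or.inl ha)
    · exact he ▸ ih
    · exact ih.tail (Or.inr ha)
    · exact he ▸ ih
end BoxAux

/-- the Cartesian product of two (nonempty) digraphs is consistently
directed iff both factors are. -/
theorem box_consistentlyDirected_iff {V₁ V₂ : Type*} [Fintype V₁] [Fintype V₂]
    [Nonempty V₁] [Nonempty V₂]
    (A₁ : V₁ → V₁ → Prop) (A₂ : V₂ → V₂ → Prop)
    (h₁ : Irreflexive A₁) (h₂ : Irreflexive A₂) :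
    ConsistentlyDirected (boxAdj A₁ A₂) ↔
      ConsistentlyDirected A₁ ∧ ConsistentlyDirected A₂ := by
  constructor
  · rintro ⟨⟨hwc, ⟨s, hs, hsu⟩, ⟨t, ht, htu⟩⟩, hnc⟩
    obtain ⟨hs1, hs2⟩ := (isSource_box_iff s).mp hs
    obtain ⟨ht1, ht2⟩ := (isTarget_box_iff t).mp ht
    have w₁ : V₁ := Classical.arbitrary V₁
    have w₂ : V₂ := Classical.arbitrary V₂
    refine ⟨⟨⟨?_, ⟨s.1, hs1, ?_⟩, ⟨t.1, ht1, ?_⟩⟩, ?_⟩,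
            ⟨⟨?_, ⟨s.2, hs2, ?_⟩, ⟨t.2, ht2, ?_⟩⟩, ?_⟩⟩
    · intro a b; exact box_sym_proj1 (hwc (a, w₂) (b, w₂))
    · intro y hy
      exact congrArg Prod.fst (hsu (y, s.2) ((isSource_box_iff _).mpr ⟨hy, hs2⟩))
    · intro y hy
      exact congrArg Prod.fst (htu (y, t.2) ((isTarget_box_iff _).mpr ⟨hy, ht2⟩))
    · intro v hv
      exact hnc (v, w₂)
        (Relation.TransGen.lift (r := A₁) (p := boxAdj A₁ A₂) (fun x => (x, w₂)) (fun a b h => Or.inr ⟨rfl, h⟩) _ _ hv)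
    · intro a b; exact box_sym_proj2 (hwc (w₁, a) (w₁, b))
    · intro y hy
      exact congrArg Prod.snd (hsu (s.1, y) ((isSource_box_iff _).mpr ⟨hs1, hy⟩))
    · intro y hy
      exact congrArg Prod.snd (htu (t.1, y) ((isTarget_box_iff _).mpr ⟨ht1, hy⟩))
    · intro v hv
      exact hnc (w₁, v)
        (Relation.TransGen.lift (r := A₂) (p := boxAdj A₁ A₂) (fun x => (w₁, x)) (fun a b h => Or.inl ⟨rfl, h⟩) _ _ hv)
  · rintro ⟨⟨⟨hwc1, ⟨s1, hs1, hsu1⟩, ⟨t1, ht1, htu1⟩⟩, hnc1⟩,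
            ⟨⟨hwc2, ⟨s2, hs2, hsu2⟩, ⟨t2, ht2, htu2⟩⟩, hnc2⟩⟩
    refine ⟨⟨?_, ⟨(s1, s2), (isSource_box_iff _).mpr ⟨hs1, hs2⟩, ?_⟩,
             ⟨(t1, t2), (isTarget_box_iff _).mpr ⟨ht1, ht2⟩, ?_⟩⟩, ?_⟩
    · intro a b
      have p1 : Relation.ReflTransGen
          (fun x y => boxAdj A₁ A₂ x y ∨ boxAdj A₁ A₂ y x) (a.1, a.2) (b.1, a.2) :=
        Relation.ReflTransGen.lift (r := fun x y => A₁ x y ∨ A₁ y x)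
          (p := fun x y => boxAdj A₁ A₂ x y ∨ boxAdj A₁ A₂ y x) (fun x => (x, a.2))
          (fun x y h => h.imp (fun h => Or.inr ⟨rfl, h⟩) (fun h => Or.inr ⟨rfl, h⟩))
          _ _ (hwc1 a.1 b.1)
      have p2 : Relation.ReflTransGen
          (fun x y => boxAdj A₁ A₂ x y ∨ boxAdj A₁ A₂ y x) (b.1, a.2) (b.1, b.2) :=
        Relation.ReflTransGen.lift (r := fun x y => A₂ x y ∨ A₂ y x)
          (p := fun x y => boxAdj A₁ A₂ x y ∨ boxAdj A₁ A₂ y x) (fun x => (b.1, x))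
          (fun x y h => h.imp (fun h => Or.inl ⟨rfl, h⟩) (fun h => Or.inl ⟨rfl, h⟩))
          _ _ (hwc2 a.2 b.2)
      exact p1.trans p2
    · intro y hy
      obtain ⟨hy1, hy2⟩ := (isSource_box_iff y).mp hy
      exact Prod.ext (hsu1 y.1 hy1) (hsu2 y.2 hy2)
    · intro y hy
      obtain ⟨hy1, hy2⟩ := (isTarget_box_iff y).mp hy
      exact Prod.ext (htu1 y.1 hy1) (htu2 y.2 hy2)
    · intro v hv
      rcases box_transGen_proj hv with h | h
      · exact hnc1 v.1 h
      · exact hnc2 v.2 h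
end

section
/- For every n ≥ 0, the simplicial digraph Δⁿ is prime with respect to the Cartesian product: if Δⁿ is isomorphic to G₁ □ G₂ for digraphs G₁ and G₂, then G₁ or G₂ is the trivial digraph on exactly one vertex. -/
/-- the simplicial digraph `Δⁿ` is prime with respect to the Cartesian
product: if `Δⁿ ≅ G₁ □ G₂` then `G₁` or `G₂` is the one-vertex digraph. -/
theorem simplex_prime (n : ℕ) {V₁ V₂ : Type*} [Fintype V₁] [Fintype V₂]
    (A₁ : V₁ → V₁ → Prop) (A₂ : V₂ → V₂ → Prop)
    (h₁ : Irreflexive A₁) (h₂ : Irreflexive A₂)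
    (hiso : DigraphIso (simplexAdj n) (boxAdj A₁ A₂)) :
    Fintype.card V₁ = 1 ∨ Fintype.card V₂ = 1 := by
  obtain ⟨e, he⟩ := hiso
  have hne : Nonempty (V₁ × V₂) := ⟨e 0⟩
  have hne₁ : Nonempty V₁ := ⟨hne.some.1⟩
  have hne₂ : Nonempty V₂ := ⟨hne.some.2⟩
  by_contra h
  push_neg at h
  obtain ⟨hc₁, hc₂⟩ := h
  have hp1 : 0 < Fintype.card V₁ := Fintype.card_pos
  have hp2 : 0 < Fintype.card V₂ := Fintype.card_pos
  have h1 : 2 ≤ Fintype.card V₁ := by omega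
  have h2 : 2 ≤ Fintype.card V₂ := by omega
  obtain ⟨u₁, u₂, hu⟩ := Fintype.exists_pair_of_one_lt_card h1
  obtain ⟨v₁, v₂, hv⟩ := Fintype.exists_pair_of_one_lt_card h2
  -- the two vertices (u₁,v₁) and (u₂,v₂) differ in both coordinates: never adjacent
  set a := e.symm (u₁, v₁)
  set b := e.symm (u₂, v₂)
  have hab : a ≠ b := fun hh => by
    have := congrArg e hh
    simp only [a, b, Equiv.apply_symm_apply] at this
    exact hu (congrArg Prod.fst this)
  have hadj : simplexAdj n a b ∨ simplexAdj n b a := by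
    rcases lt_or_gt_of_ne hab with hh | hh
    · exact Or.inl hh
    · exact Or.inr hh
  have hbox : boxAdj A₁ A₂ (u₁, v₁) (u₂, v₂) ∨ boxAdj A₁ A₂ (u₂, v₂) (u₁, v₁) := by
    rcases hadj with hh | hh
    · left
      have := (he a b).mpr hh
      simpa only [a, b, Equiv.apply_symm_apply] using this
    · right
      have := (he b a).mpr hh
      simpa only [a, b, Equiv.apply_symm_apply] using this
  rcases hbox with (⟨hf, _⟩ | ⟨hs, _⟩) | (⟨hf, _⟩ | ⟨hs, _⟩) <;>
    simp_all [boxAdj]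
end

section
/- Let w be a double occurrence word. For each symbol x occurring in w, there exists a unique maximal repeat or return factor u ∈ M^SOW_w such that x occurs in u. -/
/-- A double occurrence word: every symbol occurs zero or exactly two times. -/
def IsDOW (w : List ℕ) : Prop := ∀ x : ℕ, w.count x = 0 ∨ w.count x = 2

/-- `u` is a repeat factor of `w`: `u` is a nonempty single occurrence word and
`w = x u y u z`. -/
def IsRepeatFactor (u w : List ℕ) : Prop :=
  u ≠ [] ∧ u.Nodup ∧ ∃ x y z : List ℕ, w = x ++ u ++ y ++ u ++ z

/-- `u` is a return factor of `w`: `u` is a nonempty single occurrence word and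
`w = x u y u^R z`. -/
def IsReturnFactor (u w : List ℕ) : Prop :=
  u ≠ [] ∧ u.Nodup ∧ ∃ x y z : List ℕ, w = x ++ u ++ y ++ u.reverse ++ z

/-- `u` is a repeat or return factor of `w`. -/
def IsRRFactor (u w : List ℕ) : Prop := IsRepeatFactor u w ∨ IsReturnFactor u w

/-- `u` is a maximal repeat or return factor of `w`: no repeat or return factor of `w`
containing `u` as a contiguous factor is strictly longer. `M^SOW_w = {u | IsMaximalRR u w}`. -/
def IsMaximalRR (u w : List ℕ) : Prop :=
  IsRRFactor u w ∧ ∀ v : List ℕ, IsRRFactor v w → u <:+: v → v.length ≤ u.length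

/-- Ascending-order equivalence: `w ~ w'` iff `w' = map f w` for a bijection `f`
of the alphabet. -/
def AOEquiv (w w' : List ℕ) : Prop := ∃ f : ℕ ≃ ℕ, w' = w.map f

instance aoSetoid : Setoid (List ℕ) where
  r := AOEquiv
  iseqv := by
    refine ⟨fun w => ⟨Equiv.refl ℕ, by simp⟩, ?_, ?_⟩
    · rintro w w' ⟨f, rfl⟩
      exact ⟨f.symm, by simp [List.map_map]⟩
    · rintro a b c ⟨f, rfl⟩ ⟨g, rfl⟩
      exact ⟨f.trans g, by simp [List.map_map]⟩

/-- Ascending-order equivalence classes of words. -/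
abbrev WordClass : Type := Quotient aoSetoid

/-- `v` is an immediate successor of `w` (i.e. `v ∈ D(w)`): `v` is ascending-order
equivalent to `d_u(w)` for some maximal repeat or return factor `u` of `w`. -/
def ImmSucc (w v : List ℕ) : Prop :=
  ∃ u x y z : List ℕ, IsMaximalRR u w ∧
    (w = x ++ u ++ y ++ u ++ z ∨ w = x ++ u ++ y ++ u.reverse ++ z) ∧
    AOEquiv (x ++ y ++ z) v

/-- `v` is a successor of `w` (allowing `v = w`). -/
def Successor (w v : List ℕ) : Prop := Relation.ReflTransGen ImmSucc w v

/-- The vertices of the word graph `G_w`: ascending-order equivalence classes of `w`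
and all of its successors. -/
def WGVertex (w : List ℕ) : Type :=
  { c : WordClass // ∃ v : List ℕ, Successor w v ∧ Quotient.mk aoSetoid v = c }

/-- Adjacency between word classes: an edge from the class of `a` to the class of `b`
iff `b ∈ D(a)`. -/
def ClassAdj (c c' : WordClass) : Prop :=
  ∃ a b : List ℕ, Quotient.mk aoSetoid a = c ∧ Quotient.mk aoSetoid b = c' ∧ ImmSucc a b

/-- The adjacency relation of the word graph `G_w`. -/
def WGAdj (w : List ℕ) (c c' : WGVertex w) : Prop := ClassAdj c.1 c'.1

/-- `w` is coprime to `w'`: all concatenations `uv` of a vertex of `G_w` with a vertex of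
`G_{w'}` are pairwise inequivalent. -/
def CoprimeDOW (w w' : List ℕ) : Prop :=
  ∀ u u' v v' : List ℕ, Successor w u → Successor w u' → Successor w' v → Successor w' v' →
    AOEquiv (u ++ v) (u' ++ v') → (AOEquiv u u' ∧ AOEquiv v v')

/-! ### Auxiliary machinery for `unique_maximal_factor` -/

section UMFHelpers

private lemma UMF_getD_mid (X Y Z : List ℕ) {i : ℕ} (h : i < Y.length) :
    (X ++ (Y ++ Z)).getD (X.length + i) 0 = Y.getD i 0 := by
  rw [List.getD_append_right X (Y ++ Z) 0 (X.length + i) (Nat.le_add_right _ _),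
    Nat.add_sub_cancel_left, List.getD_append Y Z 0 i h]

private lemma UMF_count_drop_le (w : List ℕ) (y : ℕ) {p q : ℕ} (h : p ≤ q) :
    (w.drop q).count y ≤ (w.drop p).count y := by
  have e : w.drop q = (w.drop p).drop (q - p) := by
    rw [List.drop_drop]
    congr 1
    omega
  rw [e]
  exact (List.drop_sublist _ _).count_le y

/-- Three distinct positions carrying the same symbol contradict being a DOW. -/
private lemma UMF_three (w : List ℕ) (hw : IsDOW w) {p q r : ℕ}
    (hpq : p < q) (hqr : q < r) (hr : r < w.length)
    (e1 : w.getD p 0 = w.getD r 0) (e2 : w.getD q 0 = w.getD r 0) : False := by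
  have hq : q < w.length := hqr.trans hr
  have hp : p < w.length := hpq.trans hq
  have hcr : 1 ≤ (w.drop r).count (w.getD r 0) := by
    rw [List.drop_eq_getElem_cons hr, List.getD_eq_getElem w 0 hr, List.count_cons_self]
    omega
  have hcq : 2 ≤ (w.drop q).count (w.getD r 0) := by
    rw [List.drop_eq_getElem_cons hq, ← List.getD_eq_getElem w 0 hq, e2,
      List.count_cons_self]
    have := UMF_count_drop_le w (w.getD r 0) (show q + 1 ≤ r by omega)
    omega
  have hcp : 3 ≤ (w.drop p).count (w.getD r 0) := by
    rw [List.drop_eq_getElem_cons hp, ← List.getD_eq_getElem w 0 hp, e1,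
      List.count_cons_self]
    have := UMF_count_drop_le w (w.getD r 0) (show p + 1 ≤ q by omega)
    omega
  have hle : (w.drop p).count (w.getD r 0) ≤ w.count (w.getD r 0) :=
    (List.drop_sublist _ _).count_le _
  rcases hw (w.getD r 0) with h | h <;> omega

/-- In a DOW, the "other occurrence" of a symbol is unique. -/
private lemma UMF_other_unique (w : List ℕ) (hw : IsDOW w) {p q r : ℕ}
    (hp : p < w.length) (hq : q < w.length) (hr : r < w.length)
    (hqp : q ≠ p) (hrp : r ≠ p)
    (e1 : w.getD q 0 = w.getD p 0) (e2 : w.getD r 0 = w.getD p 0) : q = r := by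
  by_contra hne
  rcases Nat.lt_trichotomy p q with h1 | h1 | h1
  · rcases Nat.lt_trichotomy q r with h2 | h2 | h2
    · exact UMF_three w hw h1 h2 hr e2.symm (e1.trans e2.symm)
    · exact hne h2
    · rcases Nat.lt_trichotomy p r with h3 | h3 | h3
      · exact UMF_three w hw h3 h2 hq e1.symm (e2.trans e1.symm)
      · exact hrp h3.symm
      · exact UMF_three w hw h3 h1 hq (e2.trans e1.symm) e1.symm
  · exact hqp h1.symm
  · rcases Nat.lt_trichotomy p r with h2 | h2 | h2
    · exact UMF_three w hw h1 h2 hr (e1.trans e2.symm) e2.symm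
    · exact hrp h2.symm
    · rcases Nat.lt_trichotomy q r with h3 | h3 | h3
      · exact UMF_three w hw h3 h2 hp e1 e2
      · exact hne h3
      · exact UMF_three w hw h3 h1 hp e2 e1

/-- Occurrence data for a repeat/return factor. -/
private def UMF_Occ (w u : List ℕ) (a b : ℕ) (rev : Bool) : Prop :=
  a + u.length ≤ b ∧ b + u.length ≤ w.length ∧
  (∀ i, i < u.length → w.getD (a + i) 0 = u.getD i 0) ∧
  (∀ i, i < u.length → w.getD (b + i) 0 = u.getD (if rev then u.length - 1 - i else i) 0)

private lemma UMF_occ_repeat (u X Y Z : List ℕ) :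
    UMF_Occ (X ++ u ++ Y ++ u ++ Z) u X.length (X.length + u.length + Y.length) false := by
  refine ⟨by omega, ?_, ?_, ?_⟩
  · simp only [List.length_append]
    omega
  · intro i hi
    have e : X ++ u ++ Y ++ u ++ Z = X ++ (u ++ (Y ++ (u ++ Z))) := by
      simp [List.append_assoc]
    rw [e]
    exact UMF_getD_mid X u _ hi
  · intro i hi
    have e : X ++ u ++ Y ++ u ++ Z = (X ++ (u ++ Y)) ++ (u ++ Z) := by
      simp [List.append_assoc]
    have hl : X.length + u.length + Y.length + i = (X ++ (u ++ Y)).length + i := by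
      simp [List.length_append]
      omega
    rw [e, hl, UMF_getD_mid (X ++ (u ++ Y)) u Z hi]
    simp

private lemma UMF_occ_return (u X Y Z : List ℕ) :
    UMF_Occ (X ++ u ++ Y ++ u.reverse ++ Z) u X.length (X.length + u.length + Y.length)
      true := by
  refine ⟨by omega, ?_, ?_, ?_⟩
  · simp only [List.length_append, List.length_reverse]
    omega
  · intro i hi
    have e : X ++ u ++ Y ++ u.reverse ++ Z = X ++ (u ++ (Y ++ (u.reverse ++ Z))) := by
      simp [List.append_assoc]
    rw [e]
    exact UMF_getD_mid X u _ hi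
  · intro i hi
    have e : X ++ u ++ Y ++ u.reverse ++ Z = (X ++ (u ++ Y)) ++ (u.reverse ++ Z) := by
      simp [List.append_assoc]
    have hl : X.length + u.length + Y.length + i = (X ++ (u ++ Y)).length + i := by
      simp [List.length_append]
      omega
    have hi' : i < u.reverse.length := by simpa using hi
    rw [e, hl, UMF_getD_mid (X ++ (u ++ Y)) u.reverse Z hi']
    have h1 : u.length - 1 - i < u.length := by omega
    rw [List.getD_eq_getElem u.reverse 0 hi', List.getElem_reverse,
      List.getD_eq_getElem u 0 (by simpa using h1)]
    simp

private lemma UMF_rr_ne {u w : List ℕ} (h : IsRRFactor u w) : u ≠ [] ∧ u.Nodup := by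
  rcases h with ⟨h1, h2, -⟩ | ⟨h1, h2, -⟩ <;> exact ⟨h1, h2⟩

private lemma UMF_occ_of_RR {u w : List ℕ} (h : IsRRFactor u w) :
    ∃ a b rev, UMF_Occ w u a b rev := by
  rcases h with ⟨-, -, X, Y, Z, hww⟩ | ⟨-, -, X, Y, Z, hww⟩
  · exact ⟨_, _, false, by rw [hww]; exact UMF_occ_repeat u X Y Z⟩
  · exact ⟨_, _, true, by rw [hww]; exact UMF_occ_return u X Y Z⟩

private lemma UMF_occ_w2 {w u : List ℕ} {a b : ℕ} {rev : Bool} (h : UMF_Occ w u a b rev) :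
    ∀ i, i < u.length → w.getD (b + (if rev then u.length - 1 - i else i)) 0 = u.getD i 0 := by
  intro i hi
  cases rev with
  | false => simpa using h.2.2.2 i hi
  | true =>
    have h' := h.2.2.2 (u.length - 1 - i) (by omega)
    simp only [if_true] at h' ⊢
    rwa [show u.length - 1 - (u.length - 1 - i) = i by omega] at h'

private lemma UMF_window_getD (w : List ℕ) (a k i : ℕ) (hik : i < k) (hk : a + k ≤ w.length) :
    ((w.drop a).take k).getD i 0 = w.getD (a + i) 0 := by
  have h1 : i < ((w.drop a).take k).length := by
    simp only [List.length_take, List.length_drop]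
    omega
  rw [List.getD_eq_getElem _ 0 h1, List.getD_eq_getElem w 0 (by omega)]
  simp [List.getElem_take, List.getElem_drop]

private lemma UMF_nodup_getD {l : List ℕ} (h : l.Nodup) {i j : ℕ} (hi : i < l.length)
    (hj : j < l.length) (e : l.getD i 0 = l.getD j 0) : i = j := by
  rw [List.getD_eq_getElem _ 0 hi, List.getD_eq_getElem _ 0 hj] at e
  have h2 : (⟨i, hi⟩ : Fin l.length) = ⟨j, hj⟩ :=
    List.nodup_iff_injective_getElem.mp h e
  simpa using h2

private lemma UMF_nodup_window (w : List ℕ) (a k : ℕ) (hk : a + k ≤ w.length)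
    (h : ∀ q1 q2, a ≤ q1 → q1 < q2 → q2 < a + k → w.getD q1 0 = w.getD q2 0 → False) :
    ((w.drop a).take k).Nodup := by
  rw [List.nodup_iff_injective_getElem]
  rintro ⟨i, hi⟩ ⟨j, hj⟩ hij
  simp only [List.length_take, List.length_drop] at hi hj
  have hik : i < k := by omega
  have hjk : j < k := by omega
  have eq' : w.getD (a + i) 0 = w.getD (a + j) 0 := by
    rw [← UMF_window_getD w a k i hik hk, ← UMF_window_getD w a k j hjk hk,
      List.getD_eq_getElem _ 0 (by simp only [List.length_take, List.length_drop]; omega),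
      List.getD_eq_getElem _ 0 (by simp only [List.length_take, List.length_drop]; omega)]
    exact hij
  have hij' : i = j := by
    rcases Nat.lt_trichotomy i j with h1 | h1 | h1
    · exact absurd (h (a + i) (a + j) (by omega) (by omega) (by omega) eq') (fun f => f.elim)
    · exact h1
    · exact absurd (h (a + j) (a + i) (by omega) (by omega) (by omega) eq'.symm)
        (fun f => f.elim)
  simp [hij']

private lemma UMF_dropTake_infix (l : List ℕ) (a k : ℕ) : (l.drop a).take k <:+: l :=
  (List.take_prefix k (l.drop a)).isInfix.trans (List.drop_suffix a l).isInfix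

private lemma UMF_build (w : List ℕ) (a b k : ℕ) (rev : Bool) (hk : 0 < k)
    (hab : a + k ≤ b) (hb : b + k ≤ w.length)
    (hpat : ∀ i, i < k → w.getD (b + i) 0 = w.getD (a + (if rev then k - 1 - i else i)) 0)
    (hnd : ((w.drop a).take k).Nodup) :
    IsRRFactor ((w.drop a).take k) w := by
  have hak : a + k ≤ w.length := by omega
  have hlt : ((w.drop a).take k).length = k := by
    simp only [List.length_take, List.length_drop]
    omega
  have htne : (w.drop a).take k ≠ [] := by
    intro h
    rw [h] at hlt
    simp at hlt
    omega
  have hlt' : ((w.drop b).take k).length = k := by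
    simp only [List.length_take, List.length_drop]
    omega
  have hdecomp : w = w.take a ++ (w.drop a).take k ++ (w.drop (a + k)).take (b - (a + k))
      ++ (w.drop b).take k ++ w.drop (b + k) := by
    have e1 : w.take (a + k) = w.take a ++ (w.drop a).take k := List.take_add
    have e2 : w.take b = w.take (a + k) ++ (w.drop (a + k)).take (b - (a + k)) := by
      have hb' : b = (a + k) + (b - (a + k)) := by omega
      conv_lhs => rw [hb']
      exact List.take_add
    have e3 : w.take (b + k) = w.take b ++ (w.drop b).take k := List.take_add
    conv_lhs => rw [← List.take_append_drop (b + k) w, e3, e2, e1]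
  cases rev with
  | false =>
    have heq2 : (w.drop b).take k = (w.drop a).take k := by
      apply List.ext_getElem (by rw [hlt, hlt'])
      intro i h1 h2
      have hik : i < k := by rwa [hlt'] at h1
      rw [← List.getD_eq_getElem _ 0 h1, ← List.getD_eq_getElem _ 0 h2,
        UMF_window_getD w b k i hik hb, UMF_window_getD w a k i hik hak]
      simpa using hpat i hik
    rw [heq2] at hdecomp
    exact Or.inl ⟨htne, hnd, _, _, _, hdecomp⟩
  | true =>
    have heq2 : (w.drop b).take k = ((w.drop a).take k).reverse := by
      apply List.ext_getElem (by rw [hlt']; simp [hlt])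
      intro i h1 h2
      have hik : i < k := by rwa [hlt'] at h1
      have hik' : k - 1 - i < k := by omega
      have h3 : ((w.drop a).take k).length - 1 - i < ((w.drop a).take k).length := by
        rw [hlt]; omega
      rw [← List.getD_eq_getElem _ 0 h1, UMF_window_getD w b k i hik hb,
        List.getElem_reverse, ← List.getD_eq_getElem _ 0 h3, hlt,
        UMF_window_getD w a k (k - 1 - i) hik' hak]
      simpa using hpat i hik
    rw [heq2] at hdecomp
    exact Or.inr ⟨htne, hnd, _, _, _, hdecomp⟩

private lemma UMF_len_le {u w : List ℕ} (h : IsRRFactor u w) : u.length ≤ w.length := by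
  rcases h with ⟨-, -, X, Y, Z, rfl⟩ | ⟨-, -, X, Y, Z, rfl⟩ <;>
    · simp only [List.length_append, List.length_reverse]
      omega

private lemma UMF_split {w : List ℕ} {x : ℕ} (h : w.count x = 2) :
    ∃ A B C, w = A ++ [x] ++ B ++ [x] ++ C := by
  have hx : x ∈ w := List.count_pos_iff.mp (by omega)
  obtain ⟨A, B, hAB⟩ := List.append_of_mem hx
  subst hAB
  rw [List.count_append, List.count_cons_self] at h
  by_cases hxB : x ∈ B
  · obtain ⟨B1, B2, hB⟩ := List.append_of_mem hxB
    subst hB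
    exact ⟨A, B1, B2, by simp⟩
  · have hBc : B.count x = 0 := List.count_eq_zero.mpr hxB
    have hxA : x ∈ A := List.count_pos_iff.mp (by omega)
    obtain ⟨A1, A2, hA⟩ := List.append_of_mem hxA
    subst hA
    exact ⟨A1, A2, B, by simp⟩


private lemma UMF_key (w : List ℕ) (hw : IsDOW w) (u v : List ℕ)
    (hu : IsMaximalRR u w) (hv : IsMaximalRR v w)
    (hnu : u.Nodup) (hnv : v.Nodup)
    (a a2 : ℕ) (r1 : Bool) (hou : UMF_Occ w u a a2 r1)
    (c c2 : ℕ) (r2 : Bool) (hov : UMF_Occ w v c c2 r2)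
    (p : ℕ) (hpa : a ≤ p) (hpa2 : p < a + u.length)
    (hpc : c ≤ p) (hpc2 : p < c + v.length) (hac : a ≤ c) : u = v := by
  have w2 := UMF_occ_w2 hou
  have v2 := UMF_occ_w2 hov
  obtain ⟨hb1, hb2, w1, -⟩ := hou
  obtain ⟨hd1, hd2, v1, -⟩ := hov
  have hm0 : 0 < u.length := by omega
  have hn0 : 0 < v.length := by omega
  by_cases hca : c + v.length ≤ a + u.length
  · -- v is an infix of u
    have hsur : v = (u.drop (c - a)).take v.length := by
      apply List.ext_getElem
      · simp only [List.length_take, List.length_drop]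
        omega
      · intro i h1 h2
        have hin : i < v.length := h1
        have hium : c - a + i < u.length := by omega
        have e1 : w.getD (c + i) 0 = v.getD i 0 := v1 i hin
        have e2 : w.getD (a + (c - a + i)) 0 = u.getD (c - a + i) 0 := w1 _ hium
        rw [show a + (c - a + i) = c + i by omega] at e2
        rw [← List.getD_eq_getElem _ 0 h1, ← List.getD_eq_getElem _ 0 h2,
          UMF_window_getD u (c - a) v.length i hin (by omega), ← e1, ← e2]
    have hinf : v <:+: u := by
      rw [hsur]
      exact UMF_dropTake_infix u (c - a) v.length
    have l1 : u.length ≤ v.length := hv.2 u hu.1 hinf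
    exact (hinf.eq_of_length (by omega)).symm
  · push_neg at hca
    by_cases heac : a = c
    · -- u is a proper prefix of v : contradiction with maximality of u
      have hsur : u = v.take u.length := by
        apply List.ext_getElem
        · simp only [List.length_take]
          omega
        · intro i h1 h2
          have him : i < u.length := h1
          have e1 : w.getD (a + i) 0 = u.getD i 0 := w1 i him
          have e2 : w.getD (c + i) 0 = v.getD i 0 := v1 i (by omega)
          rw [← heac] at e2
          rw [← List.getD_eq_getElem _ 0 h1, ← List.getD_eq_getElem _ 0 h2]
          have h3 : (v.take u.length).getD i 0 = v.getD i 0 := by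
            rw [List.getD_eq_getElem _ 0 h2, List.getD_eq_getElem v 0 (by omega)]
            simp [List.getElem_take]
          rw [h3, ← e1, ← e2]
      have hinf : u <:+: v := by
        rw [hsur]
        exact (List.take_prefix u.length v).isInfix
      exact absurd (hu.2 v hv.1 hinf) (by omega)
    · -- proper overlap : contradiction with maximality of u
      have hacc : a < c := lt_of_le_of_ne hac heac
      have hcam : c < a + u.length := by omega
      have hi0m : c - a < u.length := by omega
      have hi01 : 1 ≤ c - a := by omega
      have hn2 : 2 ≤ v.length := by omega
      have ec_u : w.getD c 0 = u.getD (c - a) 0 := by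
        have := w1 (c - a) hi0m
        rwa [show a + (c - a) = c by omega] at this
      have ec_v : w.getD c 0 = v.getD 0 0 := by
        have := v1 0 hn0
        rwa [Nat.add_zero] at this
      -- second occurrences of everything in the second copy of v lie past c + v.length
      have hother : ∀ j, j < v.length →
          ∃ r, c + v.length ≤ r ∧ r < w.length ∧ w.getD r 0 = v.getD j 0 := by
        intro j hj
        refine ⟨c2 + (if r2 then v.length - 1 - j else j), le_trans hd1 (Nat.le_add_right _ _),
          ?_, v2 j hj⟩
        have : (if r2 then v.length - 1 - j else j) < v.length := by
          cases r2 <;> simp <;> omega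
        omega
      have winj : ∀ q1 q2, a ≤ q1 → q1 < q2 → q2 < c + v.length →
          w.getD q1 0 = w.getD q2 0 → False := by
        intro q1 q2 h1 h2 h3 heq
        by_cases hc1 : q2 < a + u.length
        · have hi' : q1 - a < u.length := by omega
          have hj' : q2 - a < u.length := by omega
          have e1 : u.getD (q1 - a) 0 = u.getD (q2 - a) 0 := by
            rw [← w1 _ hi', ← w1 _ hj', show a + (q1 - a) = q1 by omega,
              show a + (q2 - a) = q2 by omega]
            exact heq
          have := UMF_nodup_getD hnu hi' hj' e1
          omega
        · by_cases hc2 : c ≤ q1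
          · have hi' : q1 - c < v.length := by omega
            have hj' : q2 - c < v.length := by omega
            have e1 : v.getD (q1 - c) 0 = v.getD (q2 - c) 0 := by
              rw [← v1 _ hi', ← v1 _ hj', show c + (q1 - c) = q1 by omega,
                show c + (q2 - c) = q2 by omega]
              exact heq
            have := UMF_nodup_getD hnv hi' hj' e1
            omega
          · push_neg at hc1 hc2
            have hj' : q2 - c < v.length := by omega
            obtain ⟨r, hr1, hr2, hr3⟩ := hother (q2 - c) hj'
            have e2 : w.getD q2 0 = w.getD r 0 := by
              rw [hr3, ← v1 _ hj', show c + (q2 - c) = q2 by omega]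
            exact UMF_three w hw h2 (lt_of_lt_of_le h3 hr1) hr2 (heq.trans e2) e2
      have hndw : ((w.drop a).take (c + v.length - a)).Nodup := by
        apply UMF_nodup_window w a (c + v.length - a) (by omega)
        intro q1 q2 h1 h2 h3 heq
        exact winj q1 q2 h1 h2 (by omega) heq
      have hufactor : IsRRFactor ((w.drop a).take (c + v.length - a)) w → False := by
        intro hRR
        have htt : ((w.drop a).take (c + v.length - a)).take u.length
            = (w.drop a).take u.length := by
          rw [List.take_take]
          congr 1
          omega
        have htake : u = (w.drop a).take u.length := by
          apply List.ext_getElem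
          · simp only [List.length_take, List.length_drop]
            omega
          · intro i hh1 hh2
            have him : i < u.length := hh1
            rw [← List.getD_eq_getElem _ 0 hh1, ← List.getD_eq_getElem _ 0 hh2,
              UMF_window_getD w a u.length i him (by omega), w1 i him]
        have hinf : u <:+: (w.drop a).take (c + v.length - a) := by
          rw [htake, ← htt]
          exact (List.take_prefix u.length _).isInfix
        have hle := hu.2 _ hRR hinf
        have hlen : ((w.drop a).take (c + v.length - a)).length = c + v.length - a := by
          simp only [List.length_take, List.length_drop]
          omega
        omega
      -- central identification of the second occurrence of the symbol at position c
      cases r1 with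
      | false =>
        cases r2 with
        | false =>
          replace w2 : ∀ i, i < u.length → w.getD (a2 + i) 0 = u.getD i 0 :=
            fun i hi => by simpa using w2 i hi
          replace v2 : ∀ i, i < v.length → w.getD (c2 + i) 0 = v.getD i 0 :=
            fun i hi => by simpa using v2 i hi
          have Heq : a2 + (c - a) = c2 := by
            have e1 : w.getD (a2 + (c - a)) 0 = w.getD c 0 := (w2 _ hi0m).trans ec_u.symm
            have e2 : w.getD (c2 + 0) 0 = w.getD c 0 := (v2 0 hn0).trans ec_v.symm
            have := UMF_other_unique w hw (show c < w.length by omega)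
              (show a2 + (c - a) < w.length by omega) (show c2 + 0 < w.length by omega)
              (by omega) (by omega) e1 e2
            omega
          apply (hufactor (UMF_build w a a2 (c + v.length - a) false (by omega) ?_ ?_ ?_ hndw)).elim
          · -- a + k ≤ a2, i.e. c + v.length ≤ a2
            by_contra hcon
            push_neg at hcon
            have e : w.getD a 0 = w.getD a2 0 := by
              have h1 := w2 0 hm0
              have h2 := w1 0 hm0
              rw [Nat.add_zero] at h1 h2
              rw [h2, ← h1]
            exact winj a a2 (le_refl a) (by omega) (by omega) e
          · omega
          · intro i hik
            show w.getD (a2 + i) 0 = w.getD (a + i) 0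
            by_cases him : i < u.length
            · rw [w2 i him]
              exact (w1 i him).symm
            · push_neg at him
              have hj : a + i - c < v.length := by omega
              have e1 := v1 (a + i - c) hj
              have e2 := v2 (a + i - c) hj
              rw [show c + (a + i - c) = a + i by omega] at e1
              rw [show c2 + (a + i - c) = a2 + i by omega] at e2
              rw [e2, ← e1]
        | true =>
          replace w2 : ∀ i, i < u.length → w.getD (a2 + i) 0 = u.getD i 0 :=
            fun i hi => by simpa using w2 i hi
          replace v2 : ∀ i, i < v.length → w.getD (c2 + (v.length - 1 - i)) 0 = v.getD i 0 :=
            fun i hi => by simpa using v2 i hi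
          have Heq : a2 + (c - a) = c2 + (v.length - 1 - 0) := by
            have e1 : w.getD (a2 + (c - a)) 0 = w.getD c 0 := (w2 _ hi0m).trans ec_u.symm
            have e2 : w.getD (c2 + (v.length - 1 - 0)) 0 = w.getD c 0 :=
              (v2 0 hn0).trans ec_v.symm
            exact UMF_other_unique w hw (show c < w.length by omega)
              (show a2 + (c - a) < w.length by omega)
              (show c2 + (v.length - 1 - 0) < w.length by omega)
              (by omega) (by omega) e1 e2
          by_cases hov1 : c + 1 < a + u.length
          · have hi1m : c - a + 1 < u.length := by omega
            have e1 : w.getD (c + 1) 0 = u.getD (c - a + 1) 0 := by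
              have := w1 (c - a + 1) hi1m
              rwa [show a + (c - a + 1) = c + 1 by omega] at this
            have e2 : w.getD (c + 1) 0 = v.getD 1 0 := v1 1 (by omega)
            have o1 := w2 (c - a + 1) hi1m
            have o2 := v2 1 (by omega)
            have hEE : a2 + (c - a + 1) = c2 + (v.length - 1 - 1) :=
              UMF_other_unique w hw (show c + 1 < w.length by omega)
                (show a2 + (c - a + 1) < w.length by omega)
                (show c2 + (v.length - 1 - 1) < w.length by omega)
                (by omega) (by omega) (o1.trans e1.symm) (o2.trans e2.symm)
            exact absurd hEE (by omega)
          · have hamc : a + u.length = c + 1 := by omega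
            have e1 : w.getD (c - 1) 0 = u.getD (c - a - 1) 0 := by
              have := w1 (c - a - 1) (by omega)
              rwa [show a + (c - a - 1) = c - 1 by omega] at this
            have o1 := w2 (c - a - 1) (by omega)
            have e2 : w.getD (c + 1) 0 = v.getD 1 0 := v1 1 (by omega)
            have o2 := v2 1 (by omega)
            have hP : a2 + (c - a - 1) = c2 + (v.length - 1 - 1) := by omega
            have eA : w.getD (c - 1) 0 = w.getD (c2 + (v.length - 1 - 1)) 0 := by
              rw [e1, ← o1, hP]
            have eB : w.getD (c + 1) 0 = w.getD (c2 + (v.length - 1 - 1)) 0 := by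
              rw [e2, ← o2]
            exact (UMF_three w hw (show c - 1 < c + 1 by omega)
              (show c + 1 < c2 + (v.length - 1 - 1) by omega)
              (show c2 + (v.length - 1 - 1) < w.length by omega) eA eB).elim
      | true =>
        cases r2 with
        | false =>
          replace w2 : ∀ i, i < u.length → w.getD (a2 + (u.length - 1 - i)) 0 = u.getD i 0 :=
            fun i hi => by simpa using w2 i hi
          replace v2 : ∀ i, i < v.length → w.getD (c2 + i) 0 = v.getD i 0 :=
            fun i hi => by simpa using v2 i hi
          have Heq : a2 + (u.length - 1 - (c - a)) = c2 := by
            have e1 : w.getD (a2 + (u.length - 1 - (c - a))) 0 = w.getD c 0 :=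
              (w2 _ hi0m).trans ec_u.symm
            have e2 : w.getD (c2 + 0) 0 = w.getD c 0 := (v2 0 hn0).trans ec_v.symm
            have := UMF_other_unique w hw (show c < w.length by omega)
              (show a2 + (u.length - 1 - (c - a)) < w.length by omega)
              (show c2 + 0 < w.length by omega) (by omega) (by omega) e1 e2
            omega
          by_cases hov1 : c + 1 < a + u.length
          · have hi1m : c - a + 1 < u.length := by omega
            have e1 : w.getD (c + 1) 0 = u.getD (c - a + 1) 0 := by
              have := w1 (c - a + 1) hi1m
              rwa [show a + (c - a + 1) = c + 1 by omega] at this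
            have e2 : w.getD (c + 1) 0 = v.getD 1 0 := v1 1 (by omega)
            have o1 := w2 (c - a + 1) hi1m
            have o2 := v2 1 (by omega)
            have hEE : a2 + (u.length - 1 - (c - a + 1)) = c2 + 1 :=
              UMF_other_unique w hw (show c + 1 < w.length by omega)
                (show a2 + (u.length - 1 - (c - a + 1)) < w.length by omega)
                (show c2 + 1 < w.length by omega)
                (by omega) (by omega) (o1.trans e1.symm) (o2.trans e2.symm)
            exact absurd hEE (by omega)
          · have hamc : a + u.length = c + 1 := by omega
            have e1 : w.getD (c - 1) 0 = u.getD (c - a - 1) 0 := by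
              have := w1 (c - a - 1) (by omega)
              rwa [show a + (c - a - 1) = c - 1 by omega] at this
            have o1 := w2 (c - a - 1) (by omega)
            have e2 : w.getD (c + 1) 0 = v.getD 1 0 := v1 1 (by omega)
            have o2 := v2 1 (by omega)
            have hP : a2 + (u.length - 1 - (c - a - 1)) = c2 + 1 := by omega
            have eA : w.getD (c - 1) 0 = w.getD (c2 + 1) 0 := by
              rw [e1, ← o1, hP]
            have eB : w.getD (c + 1) 0 = w.getD (c2 + 1) 0 := by
              rw [e2, ← o2]
            exact (UMF_three w hw (show c - 1 < c + 1 by omega)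
              (show c + 1 < c2 + 1 by omega)
              (show c2 + 1 < w.length by omega) eA eB).elim
        | true =>
          replace w2 : ∀ i, i < u.length → w.getD (a2 + (u.length - 1 - i)) 0 = u.getD i 0 :=
            fun i hi => by simpa using w2 i hi
          replace v2 : ∀ i, i < v.length → w.getD (c2 + (v.length - 1 - i)) 0 = v.getD i 0 :=
            fun i hi => by simpa using v2 i hi
          have Heq : a2 + (u.length - 1 - (c - a)) = c2 + (v.length - 1 - 0) := by
            have e1 : w.getD (a2 + (u.length - 1 - (c - a))) 0 = w.getD c 0 :=
              (w2 _ hi0m).trans ec_u.symm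
            have e2 : w.getD (c2 + (v.length - 1 - 0)) 0 = w.getD c 0 :=
              (v2 0 hn0).trans ec_v.symm
            exact UMF_other_unique w hw (show c < w.length by omega)
              (show a2 + (u.length - 1 - (c - a)) < w.length by omega)
              (show c2 + (v.length - 1 - 0) < w.length by omega)
              (by omega) (by omega) e1 e2
          apply (hufactor (UMF_build w a c2 (c + v.length - a) true (by omega)
            (by omega) (by omega) ?_ hndw)).elim
          intro i hik
          show w.getD (c2 + i) 0 = w.getD (a + (c + v.length - a - 1 - i)) 0
          by_cases hin : i < v.length
          · have e1 := v2 (v.length - 1 - i) (by omega)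
            rw [show v.length - 1 - (v.length - 1 - i) = i by omega] at e1
            have e2 := v1 (v.length - 1 - i) (by omega)
            rw [e1, ← e2, show c + (v.length - 1 - i) = a + (c + v.length - a - 1 - i)
              by omega]
          · push_neg at hin
            have hi' : c + v.length - a - 1 - i < u.length := by omega
            have e1 := w1 (c + v.length - a - 1 - i) hi'
            have e2 := w2 (c + v.length - a - 1 - i) hi'
            rw [show a2 + (u.length - 1 - (c + v.length - a - 1 - i)) = c2 + i
              by omega] at e2
            rw [e2, ← e1]
private lemma UMF_unique (w : List ℕ) (hw : IsDOW w) (x : ℕ) {u v : List ℕ}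
    (hu : IsMaximalRR u w) (hxu : x ∈ u) (hv : IsMaximalRR v w) (hxv : x ∈ v) : u = v := by
  obtain ⟨hneu, hnu⟩ := UMF_rr_ne hu.1
  obtain ⟨hnev, hnv⟩ := UMF_rr_ne hv.1
  obtain ⟨a, a2, r1, hou⟩ := UMF_occ_of_RR hu.1
  obtain ⟨c, c2, r2, hov⟩ := UMF_occ_of_RR hv.1
  obtain ⟨i, hi, hix⟩ := List.mem_iff_getElem.mp hxu
  obtain ⟨j, hj, hjx⟩ := List.mem_iff_getElem.mp hxv
  have hb1 := hou.1
  have hb2 := hou.2.1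
  have hd1 := hov.1
  have hd2 := hov.2.1
  have hfi : (if r1 then u.length - 1 - i else i) < u.length := by
    cases r1 <;> simp <;> omega
  have hfj : (if r2 then v.length - 1 - j else j) < v.length := by
    cases r2 <;> simp <;> omega
  have hgu : w.getD (a + i) 0 = x := by
    rw [hou.2.2.1 i hi, List.getD_eq_getElem _ 0 hi, hix]
  have hgv : w.getD (c + j) 0 = x := by
    rw [hov.2.2.1 j hj, List.getD_eq_getElem _ 0 hj, hjx]
  have hqu : w.getD (a2 + (if r1 then u.length - 1 - i else i)) 0 = x := by
    rw [UMF_occ_w2 hou i hi, List.getD_eq_getElem _ 0 hi, hix]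
  have hqv : w.getD (c2 + (if r2 then v.length - 1 - j else j)) 0 = x := by
    rw [UMF_occ_w2 hov j hj, List.getD_eq_getElem _ 0 hj, hjx]
  by_cases hpp : c + j = a + i
  · rcases le_total a c with h | h
    · exact UMF_key w hw u v hu hv hnu hnv a a2 r1 hou c c2 r2 hov (a + i)
        (by omega) (by omega) (by omega) (by omega) h
    · exact (UMF_key w hw v u hv hu hnv hnu c c2 r2 hov a a2 r1 hou (a + i)
        (by omega) (by omega) (by omega) (by omega) h).symm
  · have h1 : c + j = a2 + (if r1 then u.length - 1 - i else i) :=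
      UMF_other_unique w hw (p := a + i) (by omega) (by omega) (by omega)
        hpp (by omega) (hgv.trans hgu.symm) (hqu.trans hgu.symm)
    have h2 : a + i = c2 + (if r2 then v.length - 1 - j else j) :=
      UMF_other_unique w hw (p := c + j) (by omega) (by omega) (by omega)
        (fun hcon => hpp hcon.symm) (by omega) (hgu.trans hgv.symm) (hqv.trans hgv.symm)
    exact absurd h1 (by omega)

end UMFHelpers

/-- in a DOW `w`, every symbol of `w` lies in a unique maximal repeat
or return factor of `w`. -/
theorem unique_maximal_factor (w : List ℕ) (hw : IsDOW w) (x : ℕ) (hx : x ∈ w) :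
    ∃! u : List ℕ, IsMaximalRR u w ∧ x ∈ u := by
  classical
  have hcx : w.count x = 2 := by
    rcases hw x with h | h
    · exact absurd (List.count_pos_iff.mpr hx) (by omega)
    · exact h
  obtain ⟨A, B, C, hABC⟩ := UMF_split hcx
  have hxRR : IsRRFactor [x] w :=
    Or.inl ⟨by simp, List.nodup_singleton x, A, B, C, hABC⟩
  set P : ℕ → Prop := fun k => ∃ u, IsRRFactor u w ∧ x ∈ u ∧ u.length = k with hP
  have hbound : ∀ k, P k → k ≤ w.length := by
    rintro k ⟨u, hRR, -, rfl⟩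
    exact UMF_len_le hRR
  have hP1 : P 1 := ⟨[x], hxRR, by simp, rfl⟩
  have hPmax : P (Nat.findGreatest P w.length) :=
    Nat.findGreatest_spec (hbound 1 hP1) hP1
  obtain ⟨u0, hRR0, hxu0, hlen0⟩ := hPmax
  have hmax : IsMaximalRR u0 w := by
    refine ⟨hRR0, fun t hts hinf => ?_⟩
    have hxt : x ∈ t := hinf.subset hxu0
    have hPt : P t.length := ⟨t, hts, hxt, rfl⟩
    have := Nat.le_findGreatest (hbound _ hPt) hPt
    omega
  refine ⟨u0, ⟨hmax, hxu0⟩, ?_⟩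
  rintro v ⟨hvmax, hxv⟩
  exact UMF_unique w hw x hvmax hxv hmax hxu0
end

section
/- For every double occurrence word w, the word graph rooted at w is isomorphic to the word graph rooted at its reverse: G_w ≅ G_{w^R}. -/
-- ===== auxiliary lemmas =====

lemma AOEquiv.rev {w w' : List ℕ} (h : AOEquiv w w') : AOEquiv w.reverse w'.reverse := by
  obtain ⟨f, rfl⟩ := h
  exact ⟨f, by simp⟩

lemma IsDOW.aoe {w w' : List ℕ} (h : IsDOW w) (he : AOEquiv w w') : IsDOW w' := by
  obtain ⟨f, rfl⟩ := he
  intro x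
  have hx : x = f (f.symm x) := by simp
  rw [hx, List.count_map_of_injective _ _ f.injective]
  exact h _

lemma IsDOW.rev {w : List ℕ} (h : IsDOW w) : IsDOW w.reverse := by
  intro x
  rw [List.count_reverse]
  exact h x

lemma first_occ {s : ℕ} (P : List ℕ) : ∀ (P' R R' : List ℕ), s ∉ P → s ∉ P' →
    P ++ s :: R = P' ++ s :: R' → P = P' := by
  induction P with
  | nil =>
    intro P' R R' _ hP' heq
    cases P' with
    | nil => rfl
    | cons h t =>
      simp only [List.nil_append, List.cons_append, List.cons.injEq] at heq
      exact absurd (heq.1 ▸ (List.mem_cons_self : h ∈ h :: t)) hP'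
  | cons h t ih =>
    intro P' R R' hP hP' heq
    cases P' with
    | nil =>
      simp only [List.nil_append, List.cons_append, List.cons.injEq] at heq
      exact absurd (heq.1.symm ▸ (List.mem_cons_self : s ∈ s :: t)) (heq.1 ▸ hP)
    | cons h' t' =>
      simp only [List.cons_append, List.cons.injEq] at heq
      obtain ⟨rfl, heq2⟩ := heq
      rw [ih t' R R' (fun hm => hP (List.mem_cons_of_mem _ hm))
        (fun hm => hP' (List.mem_cons_of_mem _ hm)) heq2]

lemma core_contra {u a x X r r' : List ℕ} (hnd : u.Nodup) (hlen : 2 ≤ u.length)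
    (h1 : a = x ++ u ++ r) (h2 : a = X ++ u.reverse ++ r')
    (hx : ∀ s ∈ u, s ∉ x) (hX : ∀ s ∈ u, s ∉ X) : False := by
  obtain ⟨s, us, rfl⟩ : ∃ s us, u = s :: us := by
    cases u with
    | nil => simp at hlen
    | cons a l => exact ⟨a, l, rfl⟩
  have hus : us ≠ [] := by
    intro h; rw [h] at hlen; simp at hlen
  obtain ⟨m, t, rfl⟩ : ∃ m t, us = m ++ [t] :=
    ⟨us.dropLast, us.getLast hus, (us.dropLast_append_getLast hus).symm⟩
  have hsm : s ∉ m := by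
    intro hm; exact (List.nodup_cons.mp hnd).1 (List.mem_append_left _ hm)
  have hst : s ≠ t := by
    intro h
    exact (List.nodup_cons.mp hnd).1
      (by rw [h]; exact List.mem_append_right _ (List.mem_singleton_self t))
  have htm : t ∉ m := by
    have hd := List.disjoint_of_nodup_append (List.nodup_cons.mp hnd).2
    exact fun hm => hd hm (List.mem_singleton_self t)
  have hsmem : s ∈ s :: (m ++ [t]) := List.mem_cons_self
  have htmem : t ∈ s :: (m ++ [t]) :=
    List.mem_cons_of_mem _ (List.mem_append_right _ (List.mem_singleton_self t))
  have e1s : a = x ++ s :: (m ++ [t] ++ r) := by rw [h1]; simp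
  have e2s : a = (X ++ (t :: m.reverse)) ++ s :: r' := by rw [h2]; simp
  have eqs : x = X ++ (t :: m.reverse) := first_occ x _ _ _ (hx s hsmem)
    (by
      intro hmem
      rcases List.mem_append.mp hmem with h | h
      · exact hX s hsmem h
      · rcases List.mem_cons.mp h with h | h
        · exact hst h
        · exact hsm (List.mem_reverse.mp h)) (e1s.symm.trans e2s)
  have e1t : a = (x ++ (s :: m)) ++ t :: r := by rw [h1]; simp
  have e2t : a = X ++ t :: (m.reverse ++ ([s] ++ r')) := by rw [h2]; simp
  have eqt : x ++ (s :: m) = X := first_occ _ _ _ _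
    (by
      intro hmem
      rcases List.mem_append.mp hmem with h | h
      · exact hx t htmem h
      · rcases List.mem_cons.mp h with h | h
        · exact hst h.symm
        · exact htm h) (hX t htmem) (e1t.symm.trans e2t)
  have l1 : x.length = X.length + m.length + 1 := by rw [eqs]; simp; omega
  have l2 : X.length = x.length + m.length + 1 := by rw [← eqt]; simp; omega
  omega

lemma maxRR_rev_of_repeat {a u : List ℕ} (hDOW : IsDOW a) (hmax : IsMaximalRR u a)
    {x y z : List ℕ} (hdec : a = x ++ u ++ y ++ u ++ z) :
    IsMaximalRR u.reverse a.reverse := by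
  obtain ⟨hRR, hmaxlen⟩ := hmax
  have hne : u ≠ [] := hRR.elim (fun h => h.1) (fun h => h.1)
  have hnd : u.Nodup := hRR.elim (fun h => h.2.1) (fun h => h.2.1)
  have hcount : ∀ s ∈ u, a.count s = 2 := by
    intro s hs
    rcases hDOW s with h0 | h2
    · exact absurd (by rw [hdec]; simp [hs] : s ∈ a) (List.count_eq_zero.mp h0)
    · exact h2
  have hcu : ∀ s ∈ u, u.count s = 1 := fun s hs => List.count_eq_one_of_mem hnd hs
  refine ⟨Or.inl ⟨by simpa using hne, List.nodup_reverse.mpr hnd,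
    z.reverse, y.reverse, x.reverse, by rw [hdec]; simp⟩, ?_⟩
  intro v hv hinf
  rw [List.length_reverse]
  rcases hv with ⟨vne, vnd, A, B, C, hv⟩ | ⟨vne, vnd, A, B, C, hv⟩
  · -- v repeat factor of a.reverse, so v.reverse is a repeat factor of a
    have hva : a = C.reverse ++ v.reverse ++ B.reverse ++ v.reverse ++ A.reverse := by
      rw [show a = a.reverse.reverse by simp, hv]
      simp [List.append_assoc]
    have hrr : IsRRFactor v.reverse a :=
      Or.inl ⟨by simpa using vne, List.nodup_reverse.mpr vnd, _, _, _, hva⟩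
    have hi : u <:+: v.reverse := by
      rw [← List.reverse_infix]; simpa using hinf
    simpa using hmaxlen _ hrr hi
  · -- v return factor of a.reverse, so v is a return factor of a
    have hva : a = C.reverse ++ v ++ B.reverse ++ v.reverse ++ A.reverse := by
      rw [show a = a.reverse.reverse by simp, hv]
      simp [List.append_assoc]
    by_cases hlen : 2 ≤ u.length
    · exfalso
      obtain ⟨p, q, hpq⟩ := hinf
      refine core_contra hnd hlen (show a = x ++ u ++ (y ++ u ++ z) by rw [hdec]; simp)
        (show a = (C.reverse ++ p) ++ u.reverse ++ (q ++ B.reverse ++ v.reverse ++ A.reverse) by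
          rw [hva, ← hpq]; simp) ?_ ?_
      · intro s hs
        have h2 := hcount s hs
        rw [hdec] at h2
        simp only [List.count_append, hcu s hs] at h2
        exact List.count_eq_zero.mp (by omega)
      · intro s hs
        have h2 := hcount s hs
        have hsv : s ∈ v := by rw [← hpq]; simp [hs]
        have hv1 : v.count s = 1 := List.count_eq_one_of_mem vnd hsv
        rw [hva] at h2
        simp only [List.count_append, List.count_reverse, hv1] at h2
        have hp0 : p.count s = 0 := by
          have h3 := hv1
          rw [← hpq] at h3
          simp only [List.count_append, List.count_reverse, hcu s hs] at h3
          omega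
        intro hmem
        rcases List.mem_append.mp hmem with hm | hm
        · exact List.count_eq_zero.mp (by omega : C.count s = 0) (List.mem_reverse.mp hm)
        · exact (List.count_eq_zero.mp hp0) hm
    · have h1 : u.length = 1 := by
        have := List.length_pos_iff.mpr hne; omega
      obtain ⟨c, rfl⟩ := List.length_eq_one_iff.mp h1
      exact hmaxlen v (Or.inr ⟨vne, vnd, _, _, _, hva⟩) (by simpa using hinf)

lemma maxRR_rev_of_return {a u : List ℕ} (hDOW : IsDOW a) (hmax : IsMaximalRR u a)
    {x y z : List ℕ} (hdec : a = x ++ u ++ y ++ u.reverse ++ z) :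
    IsMaximalRR u a.reverse := by
  obtain ⟨hRR, hmaxlen⟩ := hmax
  have hne : u ≠ [] := hRR.elim (fun h => h.1) (fun h => h.1)
  have hnd : u.Nodup := hRR.elim (fun h => h.2.1) (fun h => h.2.1)
  have hcount : ∀ s ∈ u, a.count s = 2 := by
    intro s hs
    rcases hDOW s with h0 | h2
    · exact absurd (by rw [hdec]; simp [hs] : s ∈ a) (List.count_eq_zero.mp h0)
    · exact h2
  have hcu : ∀ s ∈ u, u.count s = 1 := fun s hs => List.count_eq_one_of_mem hnd hs
  refine ⟨Or.inr ⟨hne, hnd, z.reverse, y.reverse, x.reverse, by rw [hdec]; simp⟩, ?_⟩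
  intro v hv hinf
  rcases hv with ⟨vne, vnd, A, B, C, hv⟩ | ⟨vne, vnd, A, B, C, hv⟩
  · -- v repeat factor of a.reverse, so v.reverse is a repeat factor of a
    have hva : a = C.reverse ++ v.reverse ++ B.reverse ++ v.reverse ++ A.reverse := by
      rw [show a = a.reverse.reverse by simp, hv]
      simp [List.append_assoc]
    by_cases hlen : 2 ≤ u.length
    · exfalso
      have hinf' : u.reverse <:+: v.reverse := List.reverse_infix.mpr hinf
      obtain ⟨p, q, hpq⟩ := hinf'
      refine core_contra hnd hlen
        (show a = x ++ u ++ (y ++ u.reverse ++ z) by rw [hdec]; simp)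
        (show a = (C.reverse ++ p) ++ u.reverse ++ (q ++ B.reverse ++ v.reverse ++ A.reverse) by
          rw [hva, ← hpq]; simp) ?_ ?_
      · intro s hs
        have h2 := hcount s hs
        rw [hdec] at h2
        simp only [List.count_append, List.count_reverse, hcu s hs] at h2
        exact List.count_eq_zero.mp (by omega)
      · intro s hs
        have h2 := hcount s hs
        have hsv : s ∈ v := List.mem_reverse.mp (by rw [← hpq]; simp [hs])
        have hv1 : v.count s = 1 := List.count_eq_one_of_mem vnd hsv
        rw [hva] at h2
        simp only [List.count_append, List.count_reverse, hv1] at h2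
        have hp0 : p.count s = 0 := by
          have h3 : v.reverse.count s = 1 := by rw [List.count_reverse]; exact hv1
          rw [← hpq] at h3
          simp only [List.count_append, List.count_reverse, hcu s hs] at h3
          omega
        intro hmem
        rcases List.mem_append.mp hmem with hm | hm
        · exact List.count_eq_zero.mp (by omega : C.count s = 0) (List.mem_reverse.mp hm)
        · exact (List.count_eq_zero.mp hp0) hm
    · have h1 : u.length = 1 := by
        have := List.length_pos_iff.mpr hne; omega
      obtain ⟨c, rfl⟩ := List.length_eq_one_iff.mp h1
      have hrr : IsRRFactor v.reverse a :=
        Or.inl ⟨by simpa using vne, List.nodup_reverse.mpr vnd, _, _, _, hva⟩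
      have hi : [c] <:+: v.reverse := by
        rw [show ([c] : List ℕ) = [c].reverse from rfl, List.reverse_infix]
        exact hinf
      simpa using hmaxlen _ hrr hi
  · -- v return factor of a.reverse, so v is a return factor of a
    have hva : a = C.reverse ++ v ++ B.reverse ++ v.reverse ++ A.reverse := by
      rw [show a = a.reverse.reverse by simp, hv]
      simp [List.append_assoc]
    exact hmaxlen v (Or.inr ⟨vne, vnd, _, _, _, hva⟩) hinf

lemma immSucc_rev {a b : List ℕ} (hDOW : IsDOW a) (h : ImmSucc a b) :
    ImmSucc a.reverse b.reverse := by
  obtain ⟨u, x, y, z, hmax, hdec | hdec, haoe⟩ := h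
  · refine ⟨u.reverse, z.reverse, y.reverse, x.reverse,
      maxRR_rev_of_repeat hDOW hmax hdec, Or.inl (by rw [hdec]; simp), ?_⟩
    have := haoe.rev
    simpa [List.append_assoc] using this
  · refine ⟨u, z.reverse, y.reverse, x.reverse,
      maxRR_rev_of_return hDOW hmax hdec, Or.inr (by rw [hdec]; simp), ?_⟩
    have := haoe.rev
    simpa [List.append_assoc] using this

lemma immSucc_dow {a b : List ℕ} (hDOW : IsDOW a) (h : ImmSucc a b) : IsDOW b := by
  obtain ⟨u, x, y, z, hmax, hdec, haoe⟩ := h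
  have hnd : u.Nodup := hmax.1.elim (fun h => h.2.1) (fun h => h.2.1)
  have hdow : IsDOW (x ++ y ++ z) := by
    intro s
    have ha := hDOW s
    by_cases hs : s ∈ u
    · have hcu : u.count s = 1 := List.count_eq_one_of_mem hnd hs
      rcases hdec with rfl | rfl <;>
        simp only [List.count_append, List.count_reverse, hcu] at ha ⊢ <;> omega
    · have hcu : u.count s = 0 := List.count_eq_zero.mpr hs
      rcases hdec with rfl | rfl <;>
        simp only [List.count_append, List.count_reverse, hcu] at ha ⊢ <;> omega
  exact hdow.aoe haoe

lemma successor_rev_dow {w v : List ℕ} (hDOW : IsDOW w) (h : Successor w v) :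
    Successor w.reverse v.reverse ∧ IsDOW v := by
  induction h with
  | refl => exact ⟨Relation.ReflTransGen.refl, hDOW⟩
  | tail hs hstep ih =>
    exact ⟨ih.1.tail (immSucc_rev ih.2 hstep), immSucc_dow ih.2 hstep⟩

def revClass : WordClass → WordClass :=
  Quotient.map List.reverse (by
    rintro a b ⟨f, rfl⟩
    exact ⟨f, by simp⟩)

lemma revClass_mk (v : List ℕ) :
    revClass (Quotient.mk aoSetoid v) = Quotient.mk aoSetoid v.reverse := rfl

lemma revClass_revClass (c : WordClass) : revClass (revClass c) = c := by
  induction c using Quotient.inductionOn with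
  | h v => rw [revClass_mk, revClass_mk, List.reverse_reverse]

lemma classAdj_rev {w : List ℕ} (hw : IsDOW w) {c c' : WordClass}
    (hc : ∃ v, Successor w v ∧ Quotient.mk aoSetoid v = c)
    (h : ClassAdj c c') : ClassAdj (revClass c) (revClass c') := by
  obtain ⟨v, hv, rfl⟩ := hc
  obtain ⟨α, β, hα, hβ, hab⟩ := h
  have hvd : IsDOW v := (successor_rev_dow hw hv).2
  have hαd : IsDOW α := hvd.aoe (aoSetoid.symm (Quotient.exact hα))
  refine ⟨α.reverse, β.reverse, ?_, ?_, immSucc_rev hαd hab⟩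
  · rw [← revClass_mk, hα]
  · rw [← revClass_mk, hβ]


/-- the word graph of a DOW is isomorphic to the word graph of its
reverse: `G_w ≅ G_{w^R}`. -/
theorem wordGraph_reverse_iso (w : List ℕ) (hw : IsDOW w) :
    DigraphIso (WGAdj w) (WGAdj w.reverse) := by

  have hwr : IsDOW w.reverse := hw.rev
  refine ⟨⟨fun c => ⟨revClass c.1, ?_⟩, fun c => ⟨revClass c.1, ?_⟩, ?_, ?_⟩, ?_⟩
  · obtain ⟨v, hs, hv⟩ := c.2
    exact ⟨v.reverse, (successor_rev_dow hw hs).1, by rw [← hv, revClass_mk]⟩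
  · obtain ⟨v, hs, hv⟩ := c.2
    have h2 := (successor_rev_dow hwr hs).1
    rw [List.reverse_reverse] at h2
    exact ⟨v.reverse, h2, by rw [← hv, revClass_mk]⟩
  · intro c
    exact Subtype.ext (revClass_revClass c.1)
  · intro c
    exact Subtype.ext (revClass_revClass c.1)
  · intro c c'
    constructor
    · intro h
      have hc : ∃ v, Successor w.reverse v ∧ Quotient.mk aoSetoid v = revClass c.1 := by
        obtain ⟨v, hs, hv⟩ := c.2
        exact ⟨v.reverse, (successor_rev_dow hw hs).1, by rw [← hv, revClass_mk]⟩
      have h' : ClassAdj (revClass c.1) (revClass c'.1) := h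
      have h2 := classAdj_rev hwr hc h'
      rwa [revClass_revClass, revClass_revClass] at h2
    · intro h
      exact classAdj_rev hw c.2 h
end

section
/- For every nonempty double occurrence word w, the word graph G_w is consistently directed: it is weakly connected, it has no directed cycles, its unique source is the class of w, and its unique target is the class of the empty word ε. -/
-- ===== Auxiliary lemmas =====

lemma AOEquiv.length_eq' {a b : List ℕ} (h : AOEquiv a b) : a.length = b.length := by
  obtain ⟨f, rfl⟩ := h; simp

lemma aoequiv_isDOW {a b : List ℕ} (h : AOEquiv a b) (ha : IsDOW a) : IsDOW b := by
  obtain ⟨f, rfl⟩ := h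
  intro s
  have : (a.map f).count s = a.count (f.symm s) := by
    conv_lhs => rw [show s = f (f.symm s) by simp]
    exact List.count_map_of_injective a f f.injective _
  rw [this]; exact ha _

lemma aoequiv_nil {a : List ℕ} (h : AOEquiv a []) : a = [] := by
  have := h.length_eq'; simpa using this

/-- Structure of an ImmSucc step. -/
lemma immSucc_decomp {a b : List ℕ} (h : ImmSucc a b) :
    ∃ u x y z u' : List ℕ, u ≠ [] ∧ u.Nodup ∧ (∀ t, u'.count t = u.count t) ∧
      u'.length = u.length ∧ a = x ++ u ++ y ++ u' ++ z ∧ AOEquiv (x ++ y ++ z) b := by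
  obtain ⟨u, x, y, z, hmax, hdec, heq⟩ := h
  have hne : u ≠ [] := by
    rcases hmax.1 with ⟨h1, _, _⟩ | ⟨h1, _, _⟩ <;> exact h1
  have hnd : u.Nodup := by
    rcases hmax.1 with ⟨_, h2, _⟩ | ⟨_, h2, _⟩ <;> exact h2
  rcases hdec with h1 | h1
  · exact ⟨u, x, y, z, u, hne, hnd, fun _ => rfl, rfl, h1, heq⟩
  · exact ⟨u, x, y, z, u.reverse, hne, hnd, fun t => List.count_reverse, by simp, h1, heq⟩

lemma immSucc_length_lt {a b : List ℕ} (h : ImmSucc a b) : b.length < a.length := by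
  obtain ⟨u, x, y, z, u', hne, _, _, hlen, rfl, heq⟩ := immSucc_decomp h
  have := heq.length_eq'
  have hu : 0 < u.length := List.length_pos_iff.mpr hne
  simp only [List.length_append] at this ⊢
  omega

lemma immSucc_isDOW {a b : List ℕ} (ha : IsDOW a) (h : ImmSucc a b) : IsDOW b := by
  obtain ⟨u, x, y, z, u', hne, hnd, hcnt, _, rfl, heq⟩ := immSucc_decomp h
  refine aoequiv_isDOW heq ?_
  intro t
  have hda := ha t
  simp only [List.count_append, hcnt t] at hda ⊢
  by_cases ht : t ∈ u
  · have h1 : u.count t = 1 := List.count_eq_one_of_mem hnd ht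
    rw [h1] at hda; omega
  · have h0 : u.count t = 0 := List.count_eq_zero_of_not_mem ht
    rw [h0] at hda; omega

lemma isRRFactor_length_le {u v : List ℕ} (h : IsRRFactor u v) : u.length ≤ v.length := by
  rcases h with ⟨_, _, x, y, z, rfl⟩ | ⟨_, _, x, y, z, rfl⟩ <;>
    (simp only [List.length_append]; omega)

lemma exists_immSucc {v : List ℕ} (hv : IsDOW v) (hne : v ≠ []) : ∃ b, ImmSucc v b := by
  -- first find some repeat factor: a single letter occurring twice
  have hrr : ∃ u, IsRRFactor u v := by
    obtain ⟨t, ht⟩ := List.exists_mem_of_ne_nil v hne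
    have hc2 : v.count t = 2 := by
      rcases hv t with h | h
      · exact absurd (List.count_eq_zero.mp h) (by simp [ht])
      · exact h
    obtain ⟨s, r, rfl⟩ := List.append_of_mem ht
    have hcs : s.count t + r.count t = 1 := by
      simp [List.count_append, List.count_cons] at hc2; omega
    by_cases hr : t ∈ r
    · obtain ⟨r1, r2, rfl⟩ := List.append_of_mem hr
      refine ⟨[t], Or.inl ⟨by simp, by simp, s, r1, r2, ?_⟩⟩
      simp
    · have : t ∈ s := by
        have : r.count t = 0 := List.count_eq_zero_of_not_mem hr
        have : s.count t = 1 := by omega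
        exact List.count_pos_iff.mp (by omega)
      obtain ⟨s1, s2, rfl⟩ := List.append_of_mem this
      refine ⟨[t], Or.inl ⟨by simp, by simp, s1, s2, r, ?_⟩⟩
      simp
  -- now take one of maximal length
  classical
  set P : ℕ → Prop := fun k => ∃ u, IsRRFactor u v ∧ u.length = k with hP
  obtain ⟨u0, hu0⟩ := hrr
  have hP0 : P u0.length := ⟨u0, hu0, rfl⟩
  have hb0 : u0.length ≤ v.length := isRRFactor_length_le hu0
  set n := Nat.findGreatest P v.length with hn
  have hPn : P n := Nat.findGreatest_spec hb0 hP0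
  obtain ⟨u, hu, hulen⟩ := hPn
  have hmax : IsMaximalRR u v := by
    refine ⟨hu, fun v' hv' _ => ?_⟩
    have : v'.length ≤ n :=
      Nat.le_findGreatest (isRRFactor_length_le hv') ⟨v', hv', rfl⟩
    omega
  rcases hu with ⟨_, _, x, y, z, hdec⟩ | ⟨_, _, x, y, z, hdec⟩
  · exact ⟨x ++ y ++ z, u, x, y, z, hmax, Or.inl hdec, ⟨Equiv.refl ℕ, by simp⟩⟩
  · exact ⟨x ++ y ++ z, u, x, y, z, hmax, Or.inr hdec, ⟨Equiv.refl ℕ, by simp⟩⟩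

lemma not_immSucc_nil {b : List ℕ} : ¬ ImmSucc [] b := by
  intro h
  obtain ⟨u, x, y, z, u', hne, _, _, hlen, habs, _⟩ := immSucc_decomp h
  have hu : 0 < u.length := List.length_pos_iff.mpr hne
  have := congrArg List.length habs
  simp only [List.length_append, List.length_nil] at this
  omega

lemma successor_isDOW {w v : List ℕ} (hw : IsDOW w) (h : Successor w v) : IsDOW v := by
  induction h with
  | refl => exact hw
  | tail _ hstep ih => exact immSucc_isDOW ih hstep

lemma successor_length_le {w v : List ℕ} (h : Successor w v) : v.length ≤ w.length := by
  induction h with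
  | refl => exact le_refl _
  | tail _ hstep ih => exact le_of_lt (lt_of_lt_of_le (immSucc_length_lt hstep) ih)

lemma successor_nil {v : List ℕ} (hv : IsDOW v) : Successor v [] := by
  by_cases hne : v = []
  · subst hne; exact Relation.ReflTransGen.refl
  · obtain ⟨b, hb⟩ := exists_immSucc hv hne
    have hbd : IsDOW b := immSucc_isDOW hv hb
    have : b.length < v.length := immSucc_length_lt hb
    exact Relation.ReflTransGen.head hb (successor_nil hbd)
termination_by v.length
decreasing_by exact this

/-- length descends to word classes. -/
def clen : WordClass → ℕ :=
  Quotient.lift List.length (fun _ _ h => AOEquiv.length_eq' h)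

lemma classAdj_clen_lt {c c' : WordClass} (h : ClassAdj c c') : clen c' < clen c := by
  obtain ⟨a, b, rfl, rfl, hab⟩ := h
  exact immSucc_length_lt hab


lemma path_to_eps {w : List ℕ} (hw : IsDOW w) {eVtx : WGVertex w}
    (he : eVtx.1 = Quotient.mk aoSetoid ([] : List ℕ))
    (v : List ℕ) (hsv : Successor w v) (c : WGVertex w)
    (hc : c.1 = Quotient.mk aoSetoid v) :
    Relation.ReflTransGen (fun x y => WGAdj w x y ∨ WGAdj w y x) c eVtx := by
  by_cases hne : v = []
  · subst hne
    have : c = eVtx := Subtype.ext (hc.trans he.symm)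
    rw [this]
  · have hvd : IsDOW v := successor_isDOW hw hsv
    obtain ⟨b, hb⟩ := exists_immSucc hvd hne
    have hsb : Successor w b := Relation.ReflTransGen.tail hsv hb
    have hlt : b.length < v.length := immSucc_length_lt hb
    refine Relation.ReflTransGen.head
      (Or.inl (⟨v, b, hc.symm, rfl, hb⟩ :
        ClassAdj c.1 (⟨Quotient.mk aoSetoid b, b, hsb, rfl⟩ : WGVertex w).1))
      (path_to_eps hw he b hsb _ rfl)
termination_by v.length
decreasing_by exact hlt

/-- the word graph of a nonempty DOW is consistently directed, with
unique source the class of `w` and unique target the class of the empty word. -/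
theorem wordGraph_consistentlyDirected (w : List ℕ) (hw : IsDOW w) (hne : w ≠ []) :
    ConsistentlyDirected (WGAdj w) ∧
      (∀ c : WGVertex w, IsSourceVertex (WGAdj w) c ↔ c.1 = Quotient.mk aoSetoid w) ∧
      (∀ c : WGVertex w,
        IsTargetVertex (WGAdj w) c ↔ c.1 = Quotient.mk aoSetoid ([] : List ℕ)) := by
  
  classical
  -- the ε vertex and the w vertex
  have hsnil : Successor w [] := successor_nil hw
  let eVtx : WGVertex w := ⟨Quotient.mk aoSetoid ([] : List ℕ), [], hsnil, rfl⟩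
  let wVtx : WGVertex w := ⟨Quotient.mk aoSetoid w, w, Relation.ReflTransGen.refl, rfl⟩
  -- target characterization
  have htarget : ∀ c : WGVertex w,
      IsTargetVertex (WGAdj w) c ↔ c.1 = Quotient.mk aoSetoid ([] : List ℕ) := by
    intro c
    obtain ⟨v, hsv, hvc⟩ := c.2
    constructor
    · intro htgt
      by_contra hne'
      have hvd : IsDOW v := successor_isDOW hw hsv
      have hvne : v ≠ [] := by
        rintro rfl; exact hne' hvc.symm
      obtain ⟨b, hb⟩ := exists_immSucc hvd hvne
      have hsb : Successor w b := Relation.ReflTransGen.tail hsv hb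
      exact htgt ⟨Quotient.mk aoSetoid b, b, hsb, rfl⟩ ⟨v, b, hvc, rfl, hb⟩
    · intro hc d hadj
      obtain ⟨a, b, ha, _, hab⟩ := hadj
      rw [hc] at ha
      have : a = [] := aoequiv_nil (Quotient.exact ha)
      subst this
      exact not_immSucc_nil hab
  -- source characterization
  have hsource : ∀ c : WGVertex w,
      IsSourceVertex (WGAdj w) c ↔ c.1 = Quotient.mk aoSetoid w := by
    intro c
    obtain ⟨v, hsv, hvc⟩ := c.2
    constructor
    · intro hsrc
      rcases Relation.ReflTransGen.cases_tail hsv with heq | ⟨u, hsu, huv⟩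
      · subst heq; exact hvc.symm
      · exact absurd (⟨u, v, rfl, hvc, huv⟩ : ClassAdj _ c.1)
          (hsrc ⟨Quotient.mk aoSetoid u, u, hsu, rfl⟩)
    · intro hc d hadj
      obtain ⟨a, b, ha, hb, hab⟩ := hadj
      obtain ⟨v', hsv', hv'd⟩ := d.2
      rw [← hv'd] at ha
      have hav' : a.length = v'.length := (Quotient.exact ha : AOEquiv a v').length_eq'
      rw [hc] at hb
      have hbw : b.length = w.length := (Quotient.exact hb : AOEquiv b w).length_eq'
      have h1 : b.length < a.length := immSucc_length_lt hab
      have h2 : v'.length ≤ w.length := successor_length_le hsv'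
      omega
  -- assemble
  have heV : eVtx.1 = Quotient.mk aoSetoid ([] : List ℕ) := rfl
  have hwc : WeaklyConnected (WGAdj w) := by
    intro a b
    obtain ⟨va, hsa, hva⟩ := a.2
    obtain ⟨vb, hsb, hvb⟩ := b.2
    have pa := path_to_eps hw heV va hsa a hva.symm
    have pb := path_to_eps hw heV vb hsb b hvb.symm
    have hsym : Symmetric (fun x y => WGAdj w x y ∨ WGAdj w y x) :=
      fun _ _ h => h.symm
    exact pa.trans ((@Relation.ReflTransGen.symmetric _ _ ⟨fun _ _ h => hsym h⟩).symm _ _ pb)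
  have hnc : NoDirectedCycles (WGAdj w) := by
    have key : ∀ a b : WGVertex w, Relation.TransGen (WGAdj w) a b →
        clen b.1 < clen a.1 := by
      intro a b h
      induction h with
      | single h => exact classAdj_clen_lt h
      | tail _ h ih => exact lt_trans (classAdj_clen_lt h) ih
    intro v hv
    exact lt_irrefl _ (key v v hv)
  refine ⟨⟨⟨hwc, ?_, ?_⟩, hnc⟩, hsource, htarget⟩
  · exact ⟨wVtx, (hsource wVtx).mpr rfl,
      fun c hc => Subtype.ext ((hsource c).mp hc)⟩
  · exact ⟨eVtx, (htarget eVtx).mpr rfl,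
      fun c hc => Subtype.ext ((htarget c).mp hc)⟩
end
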